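/- arXiv:2002.03427 — 2 statements merged into one kernel-verified Lean document; each statement's English description precedes it below -/
import Mathlib

section
/- (Existence part of Theorem 1.) Let m ≥ 1 and let M, D̄ be real m×m matrices with M(i,j) ≠ 0 for all i ≠ j. Let S be the set of real m×m matrices D that are symmetric, have zero diagonal (D(i,i) = 0 for all i), and satisfy the triangle inequalities D(i,j) ≤ D(i,k) + D(k,j) for all i,j,k. Then the masked objective f(D) = ‖M ⊙ (D − D̄)‖_F attains its minimum on S: there exists D* ∈ S with f(D*) ≤ f(D) for all D ∈ S. -/
/-!
The feasible set is closed, it contains `0`, and the objective is continuous. On the feasible set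
the diagonal vanishes, while an off-diagonal entry with `|D i j - D̄ i j| > f 0 / |M i j|` already
makes `f D > f 0`, since `M i j ≠ 0`. Hence the sublevel set `{f ≤ f 0}` of the feasible set lies
in a compact box, and a minimiser exists there.
-/

open Finset
open scoped Matrix

def semimetricMatrices (ι : Type*) : Set (Matrix ι ι ℝ) :=
  {D | (∀ i j, D i j = D j i) ∧ (∀ i, D i i = 0) ∧ (∀ i j k, D i j ≤ D i k + D k j)}

theorem isClosed_semimetricMatrices (ι : Type*) : IsClosed (semimetricMatrices ι) := by
  have hentry (i j : ι) : Continuous fun D : Matrix ι ι ℝ => D i j :=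
    continuous_id.matrix_elem i j
  simp only [semimetricMatrices, Set.ofPred_and, Set.ofPred_forall]
  refine .inter ?_ (.inter ?_ ?_) <;> repeat' refine isClosed_iInter fun _ => ?_
  · exact isClosed_eq (hentry _ _) (hentry _ _)
  · exact isClosed_eq (hentry _ _) continuous_const
  · exact isClosed_le (hentry _ _) ((hentry _ _).add (hentry _ _))

theorem zero_mem_semimetricMatrices (ι : Type*) : (0 : Matrix ι ι ℝ) ∈ semimetricMatrices ι := by
  simp [semimetricMatrices]

theorem Matrix.isCompact_setOf_abs_apply_le {ι κ : Type*} (R : ι → κ → ℝ) :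
    IsCompact {A : Matrix ι κ ℝ | ∀ i j, |A i j| ≤ R i j} := by
  have hbox : {A : Matrix ι κ ℝ | ∀ i j, |A i j| ≤ R i j} =
      Set.univ.pi fun i => Set.univ.pi fun j => Set.Icc (-R i j) (R i j) := by
    ext A
    simp only [Set.mem_ofPred_eq, abs_le]
    exact ⟨fun h i _ j _ => h i j, fun h i j => h i trivial j trivial⟩
  rw [hbox]
  exact isCompact_univ_pi fun i => isCompact_univ_pi fun j => isCompact_Icc

theorem Matrix.abs_apply_le_sqrt_sum_sq {ι κ : Type*} [Fintype ι] [Fintype κ]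
    (A : Matrix ι κ ℝ) (i : ι) (j : κ) : |A i j| ≤ √(∑ i, ∑ j, A i j ^ 2) :=
  Real.abs_le_sqrt <|
    (single_le_sum (f := fun j => A i j ^ 2) (fun _ _ => sq_nonneg _) (mem_univ j)).trans
      (single_le_sum (f := fun i => ∑ j, A i j ^ 2)
        (fun _ _ => sum_nonneg fun _ _ => sq_nonneg _) (mem_univ i))

theorem Matrix.abs_apply_le_of_sqrt_sum_sq_hadamard_le {ι : Type*} [Fintype ι]
    {M Dbar D : Matrix ι ι ℝ} (hM : ∀ i j, i ≠ j → M i j ≠ 0) (hD : ∀ i, D i i = 0) {c : ℝ}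
    (hc : √(∑ i, ∑ j, (M i j * (D i j - Dbar i j)) ^ 2) ≤ c) (i j : ι) :
    |D i j| ≤ |Dbar i j| + c / |M i j| := by
  rcases eq_or_ne i j with rfl | hij
  · have hc₀ : 0 ≤ c := (Real.sqrt_nonneg _).trans hc
    rw [hD, abs_zero]
    positivity
  · have hMpos : 0 < |M i j| := abs_pos.2 (hM i j hij)
    have hdiff : |D i j - Dbar i j| ≤ c / |M i j| := by
      rw [le_div_iff₀ hMpos, mul_comm, ← abs_mul]
      exact ((M ⊙ (D - Dbar)).abs_apply_le_sqrt_sum_sq i j).trans hc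
    linarith [abs_sub_abs_le_abs_sub (D i j) (Dbar i j)]

theorem ContinuousOn.exists_isMinOn_of_sublevel_subset {X : Type*} [TopologicalSpace X]
    {s K : Set X} {f : X → ℝ} (hf : ContinuousOn f s) (hs : IsClosed s) (hK : IsCompact K)
    {x₀ : X} (hx₀ : x₀ ∈ s) (hsub : ∀ x ∈ s, f x ≤ f x₀ → x ∈ K) :
    ∃ x ∈ s, IsMinOn f s x :=
  hf.exists_isMinOn' hs hx₀ <| Filter.eventually_inf_principal.2 <| Filter.mem_cocompact.2
    ⟨K, hK, fun x hxK hxs => not_lt.1 fun hlt => hxK (hsub x hxs hlt.le)⟩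

theorem masked_frobenius_exists_min_general (m : ℕ)
    (M Dbar : Matrix (Fin m) (Fin m) ℝ)
    (hM : ∀ i j, i ≠ j → M i j ≠ 0)
    (S : Set (Matrix (Fin m) (Fin m) ℝ))
    (hS : S = {D | (∀ i j, D i j = D j i) ∧ (∀ i, D i i = 0) ∧
      (∀ i j k, D i j ≤ D i k + D k j)})
    (f : Matrix (Fin m) (Fin m) ℝ → ℝ)
    (hf : ∀ D, f D = Real.sqrt (∑ i, ∑ j, (M i j * (D i j - Dbar i j)) ^ 2)) :
    ∃ Dstar ∈ S, ∀ D ∈ S, f Dstar ≤ f D := by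
  obtain rfl : S = semimetricMatrices (Fin m) := hS
  have hcont : Continuous f := by
    rw [funext hf]
    fun_prop
  obtain ⟨Dstar, hDstar, hmin⟩ := hcont.continuousOn.exists_isMinOn_of_sublevel_subset
    (isClosed_semimetricMatrices _)
    (Matrix.isCompact_setOf_abs_apply_le fun i j => |Dbar i j| + f 0 / |M i j|)
    (zero_mem_semimetricMatrices _)
    fun D hD hle => Matrix.abs_apply_le_of_sqrt_sum_sq_hadamard_le hM hD.2.1 (hf D ▸ hle)
  exact ⟨Dstar, hDstar, fun D hD => hmin hD⟩

/-- Existence part of Theorem 1: the masked Frobenius objective attains its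
minimum on the set of symmetric, zero-diagonal matrices satisfying the
triangle inequalities, provided the mask is nonzero off the diagonal. -/
theorem masked_frobenius_exists_min (m : ℕ) (hm : 1 ≤ m)
    (M Dbar : Matrix (Fin m) (Fin m) ℝ)
    (hM : ∀ i j, i ≠ j → M i j ≠ 0)
    (S : Set (Matrix (Fin m) (Fin m) ℝ))
    (hS : S = {D | (∀ i j, D i j = D j i) ∧ (∀ i, D i i = 0) ∧
      (∀ i j k, D i j ≤ D i k + D k j)})
    (f : Matrix (Fin m) (Fin m) ℝ → ℝ)
    (hf : ∀ D, f D = Real.sqrt (∑ i, ∑ j, (M i j * (D i j - Dbar i j)) ^ 2)) :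
    ∃ Dstar ∈ S, ∀ D ∈ S, f Dstar ≤ f D :=
  masked_frobenius_exists_min_general m M Dbar hM S hS f hf
end

section
/- (Uniqueness part of Theorem 1, Frobenius-norm case.) Let m ≥ 1 and let M, D̄ be real m×m matrices with M(i,j) ≠ 0 for all i ≠ j. Let S be the set of real m×m matrices D that are symmetric, have zero diagonal, and satisfy the triangle inequalities D(i,j) ≤ D(i,k) + D(k,j) for all i,j,k. Then the minimizer of f(D) = ‖M ⊙ (D − D̄)‖_F over S is unique: if D₁, D₂ ∈ S both minimize f over S, then D₁ = D₂. -/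
/-! The feasible set is convex and the objective is the Euclidean norm of the affine map
`D ↦ M ⊙ (D - Dbar)`, flattened to a vector indexed by pairs. Since every feasible `D` has zero
diagonal and `M` vanishes nowhere off the diagonal, this map is injective on the feasible set.
If two distinct minimizers existed, their images would be distinct vectors of the same norm, so
by strict convexity of the Euclidean ball the image of their (feasible) midpoint would have
strictly smaller norm. -/

open Matrix

theorem Convex.eq_of_isMinOn_norm_comp {F E : Type*} [AddCommGroup F] [Module ℝ F]
    [NormedAddCommGroup E] [NormedSpace ℝ E] [StrictConvexSpace ℝ E]
    {s : Set F} (hs : Convex ℝ s) {φ : F →ᵃ[ℝ] E} (hφ : Set.InjOn φ s) {x y : F}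
    (hx : x ∈ s) (hy : y ∈ s) (hxmin : IsMinOn (‖φ ·‖) s x) (hymin : IsMinOn (‖φ ·‖) s y) :
    x = y := by
  have hnorm : ‖φ x‖ = ‖φ y‖ := le_antisymm (hxmin hy) (hymin hx)
  apply hφ hx hy
  by_contra hne
  have hmid : ‖φ x‖ ≤ ‖midpoint ℝ (φ x) (φ y)‖ :=
    φ.map_midpoint x y ▸ hxmin (hs.midpoint_mem hx hy)
  rw [midpoint_eq_smul_add, invOf_eq_inv, ← one_div] at hmid
  exact hmid.not_gt ((norm_midpoint_lt_iff hnorm).2 hne)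

def pseudometricMatrices (n : Type*) : Set (Matrix n n ℝ) :=
  {D | (∀ i j, D i j = D j i) ∧ (∀ i, D i i = 0) ∧ (∀ i j k, D i j ≤ D i k + D k j)}

theorem convex_pseudometricMatrices (n : Type*) : Convex ℝ (pseudometricMatrices n) := by
  rintro D ⟨hsymm, hdiag, htri⟩ E ⟨hsymm', hdiag', htri'⟩ a b ha hb -
  refine ⟨fun i j => ?_, fun i => ?_, fun i j k => ?_⟩
  · simp [hsymm i j, hsymm' i j]
  · simp [hdiag i, hdiag' i]
  · simp only [Matrix.add_apply, Matrix.smul_apply, smul_eq_mul]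
    nlinarith [mul_le_mul_of_nonneg_left (htri i j k) ha,
      mul_le_mul_of_nonneg_left (htri' i j k) hb]

section Mask

variable {n : Type*}

def maskedFlatten (M : Matrix n n ℝ) : Matrix n n ℝ →ₗ[ℝ] EuclideanSpace ℝ (n × n) where
  toFun D := WithLp.toLp 2 fun p => (M ⊙ D) p.1 p.2
  map_add' D E := by ext; simp [mul_add]
  map_smul' c D := by ext; simp [mul_left_comm]

@[simp]
theorem maskedFlatten_apply (M D : Matrix n n ℝ) (i j : n) :
    maskedFlatten M D (i, j) = M i j * D i j :=
  rfl

theorem norm_maskedFlatten [Fintype n] (M D : Matrix n n ℝ) :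
    ‖maskedFlatten M D‖ = √(∑ i, ∑ j, (M i j * D i j) ^ 2) := by
  simp [EuclideanSpace.norm_eq, Fintype.sum_prod_type]

theorem injOn_maskedFlatten {M : Matrix n n ℝ} (hM : ∀ i j, i ≠ j → M i j ≠ 0) :
    Set.InjOn (maskedFlatten M) {D | ∀ i, D i i = 0} := by
  intro D₁ hD₁ D₂ hD₂ h
  ext i j
  obtain rfl | hij := eq_or_ne i j
  · rw [hD₁ i, hD₂ i]
  · have := congrArg (· (i, j)) h
    exact mul_left_cancel₀ (hM i j hij) (by simpa using this)

end Mask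

theorem masked_frobenius_unique_min_general (m : ℕ)
    (M Dbar : Matrix (Fin m) (Fin m) ℝ)
    (hM : ∀ i j, i ≠ j → M i j ≠ 0)
    (S : Set (Matrix (Fin m) (Fin m) ℝ))
    (hS : S = {D | (∀ i j, D i j = D j i) ∧ (∀ i, D i i = 0) ∧
      (∀ i j k, D i j ≤ D i k + D k j)})
    (f : Matrix (Fin m) (Fin m) ℝ → ℝ)
    (hf : ∀ D, f D = Real.sqrt (∑ i, ∑ j, (M i j * (D i j - Dbar i j)) ^ 2))
    (D₁ D₂ : Matrix (Fin m) (Fin m) ℝ)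
    (hD₁ : D₁ ∈ S) (hD₂ : D₂ ∈ S)
    (hmin₁ : ∀ D ∈ S, f D₁ ≤ f D) (hmin₂ : ∀ D ∈ S, f D₂ ≤ f D) :
    D₁ = D₂ := by
  change S = pseudometricMatrices (Fin m) at hS
  subst hS
  set φ := (maskedFlatten M).toAffineMap - AffineMap.const ℝ _ (maskedFlatten M Dbar)
  have hf_eq_norm : f = (‖φ ·‖) := by
    ext D
    simp [φ, hf, ← map_sub, norm_maskedFlatten]
  have hφ : Set.InjOn φ (pseudometricMatrices (Fin m)) := fun D₁ h₁ D₂ h₂ h =>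
    injOn_maskedFlatten hM h₁.2.1 h₂.2.1 (by simpa [φ] using h)
  subst hf_eq_norm
  exact (convex_pseudometricMatrices _).eq_of_isMinOn_norm_comp hφ hD₁ hD₂
    (isMinOn_iff.2 hmin₁) (isMinOn_iff.2 hmin₂)

/-- Uniqueness part of Theorem 1 (Frobenius-norm case): the minimizer of the
masked Frobenius objective over the set of symmetric, zero-diagonal matrices
satisfying the triangle inequalities is unique when the mask is nonzero off
the diagonal. -/
theorem masked_frobenius_unique_min (m : ℕ) (hm : 1 ≤ m)
    (M Dbar : Matrix (Fin m) (Fin m) ℝ)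
    (hM : ∀ i j, i ≠ j → M i j ≠ 0)
    (S : Set (Matrix (Fin m) (Fin m) ℝ))
    (hS : S = {D | (∀ i j, D i j = D j i) ∧ (∀ i, D i i = 0) ∧
      (∀ i j k, D i j ≤ D i k + D k j)})
    (f : Matrix (Fin m) (Fin m) ℝ → ℝ)
    (hf : ∀ D, f D = Real.sqrt (∑ i, ∑ j, (M i j * (D i j - Dbar i j)) ^ 2))
    (D₁ D₂ : Matrix (Fin m) (Fin m) ℝ)
    (hD₁ : D₁ ∈ S) (hD₂ : D₂ ∈ S)
    (hmin₁ : ∀ D ∈ S, f D₁ ≤ f D) (hmin₂ : ∀ D ∈ S, f D₂ ≤ f D) :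
    D₁ = D₂ :=
  masked_frobenius_unique_min_general m M Dbar hM S hS f hf D₁ D₂ hD₁ hD₂ hmin₁ hmin₂
end
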